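/- arXiv:2208.03355 — 5 statements merged into one kernel-verified Lean document; each statement's English description precedes it below -/
import Mathlib

section
/- If a blockchain tree has the property that every block is either accepted or rejected but not both (where a block is accepted if it is an ancestor of all but finitely many blocks, and rejected if it is an ancestor of only finitely many blocks), then the tree has exactly one infinite branch. -/
/-- `c` is a child of `b` in the blockchain tree given by `parent`. -/
def ChildOf {B : Type} (parent : B → Option B) (c b : B) : Prop := parent c = some b

/-- `b` is a (strict) ancestor of `c`. -/
def Anc {B : Type} (parent : B → Option B) (b c : B) : Prop :=
  Relation.TransGen (ChildOf parent) c b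

/-- `b` is an ancestor of `c` or equal to it. -/
def AncOrEq {B : Type} (parent : B → Option B) (b c : B) : Prop :=
  Relation.ReflTransGen (ChildOf parent) c b

/-- An infinite branch: a path from the root following the child relation. -/
def InfBranch {B : Type} (parent : B → Option B) (root : B) (f : ℕ → B) : Prop :=
  f 0 = root ∧ ∀ n, parent (f (n + 1)) = some (f n)

/-- A block is accepted if it is an ancestor of (or equal to) all but finitely many blocks. -/
def Accepted {B : Type} (parent : B → Option B) (b : B) : Prop :=
  {c | ¬ AncOrEq parent b c}.Finite

/-- A block is rejected if it is an ancestor of only finitely many blocks. -/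
def Rejected {B : Type} (parent : B → Option B) (b : B) : Prop :=
  {c | Anc parent b c}.Finite

/-- Globally decisive: every block is accepted or rejected but not both. -/
def GloballyDecisive {B : Type} (parent : B → Option B) : Prop :=
  ∀ b, (Accepted parent b ∨ Rejected parent b) ∧ ¬ (Accepted parent b ∧ Rejected parent b)

/-!
Decisiveness forces the accepted blocks to form a single branch. An accepted block is not
rejected, so by finite arity one of its children has infinitely many descendants and is therefore
accepted; two distinct accepted children are impossible, since the subtree of one is cofinite and
hence meets the infinite subtree of the other. Starting from the root (trivially accepted) this
yields an infinite branch. Conversely every block of an infinite branch has infinitely many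
descendants, so it is accepted, which pins any infinite branch to the accepted one.
-/

section Blockchain

variable {B : Type} {parent : B → Option B}

theorem childOf_rightUnique : Relator.RightUnique (ChildOf parent) := fun _ _ _ hb hc =>
  Option.some.inj (hb.symm.trans hc)

theorem not_anc_self_of_root {root : B} (hroot : parent root = none)
    (hreach : ∀ b, AncOrEq parent root b) (b : B) : ¬ Anc parent b b := by
  induction hreach b using Relation.ReflTransGen.head_induction_on with
  | refl =>
    intro hcyc
    obtain ⟨x, hx, -⟩ := Relation.TransGen.head'_iff.mp hcyc
    simp [ChildOf, hroot] at hx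
  | @head a c hac _ ih =>
    intro hcyc
    obtain ⟨x, hx, hxa⟩ := Relation.TransGen.head'_iff.mp hcyc
    obtain rfl : x = c := childOf_rightUnique hx hac
    exact ih (Relation.TransGen.tail' hxa hac)

theorem eq_of_childOf_of_ancOrEq {b c₁ c₂ : B} (hb : ¬ Anc parent b b)
    (h₁ : ChildOf parent c₁ b) (h₂ : ChildOf parent c₂ b) (h : AncOrEq parent c₂ c₁) :
    c₁ = c₂ := by
  rcases h.cases_head with heq | ⟨y, hy, hyc₂⟩
  · exact heq
  · obtain rfl : y = b := childOf_rightUnique hy h₁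
    exact absurd (Relation.TransGen.tail' hyc₂ h₂) hb

theorem accepted_of_forall_ancOrEq {b : B} (h : ∀ c, AncOrEq parent b c) :
    Accepted parent b := by
  simp [Accepted, h]

theorem rejected_of_forall_childOf_rejected {b : B} (hfin : {c | ChildOf parent c b}.Finite)
    (h : ∀ c, ChildOf parent c b → Rejected parent c) : Rejected parent b := by
  have hsub : {d | Anc parent b d} ⊆ ⋃ c ∈ {c | ChildOf parent c b}, {c} ∪ {d | Anc parent c d} := by
    intro d hd
    obtain ⟨c, hdc, hcb⟩ := Relation.TransGen.tail'_iff.mp hd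
    refine Set.mem_biUnion hcb ?_
    rcases Relation.reflTransGen_iff_eq_or_transGen.mp hdc with rfl | hanc
    · exact Or.inl rfl
    · exact Or.inr hanc
  exact (hfin.biUnion fun c hc => (Set.finite_singleton c).union (h c hc)).subset hsub

theorem childOf_eq_of_accepted_of_not_rejected {b c c' : B} (hb : ¬ Anc parent b b)
    (hc : ChildOf parent c b) (hc' : ChildOf parent c' b)
    (hacc : Accepted parent c) (hnrej : ¬ Rejected parent c') : c' = c := by
  obtain ⟨d, hd', hd⟩ := (Set.Infinite.sdiff hnrej hacc).nonempty
  have hdc : AncOrEq parent c d := not_not.mp hd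
  rcases hd'.to_reflTransGen.total_of_right_unique childOf_rightUnique hdc with h | h
  · exact eq_of_childOf_of_ancOrEq hb hc' hc h
  · exact (eq_of_childOf_of_ancOrEq hb hc hc' h).symm

namespace GloballyDecisive

variable (hdec : GloballyDecisive parent)
include hdec

theorem not_rejected {b : B} (hb : Accepted parent b) : ¬ Rejected parent b :=
  fun hrej => (hdec b).2 ⟨hb, hrej⟩

theorem accepted {b : B} (hb : ¬ Rejected parent b) : Accepted parent b :=
  (hdec b).1.resolve_right hb

theorem exists_accepted_childOf {b : B} (hfin : {c | ChildOf parent c b}.Finite)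
    (hb : Accepted parent b) : ∃ c, ChildOf parent c b ∧ Accepted parent c := by
  by_contra! h
  exact hdec.not_rejected hb <| rejected_of_forall_childOf_rejected hfin fun c hc =>
    (hdec c).1.resolve_left (h c hc)

end GloballyDecisive

theorem exists_infBranch_of_forall_exists_childOf (P : B → Prop) {root : B} (hroot : P root)
    (h : ∀ b, P b → ∃ c, ChildOf parent c b ∧ P c) : ∃ f, InfBranch parent root f := by
  choose! next hnext using h
  have hP : ∀ n, P (next^[n] root) := fun n => by
    induction n with
    | zero => exact hroot
    | succ n ih => rw [Function.iterate_succ_apply']; exact (hnext _ ih).2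
  refine ⟨fun n => next^[n] root, rfl, fun n => ?_⟩
  simp only [Function.iterate_succ_apply']
  exact (hnext _ (hP n)).1

namespace InfBranch

variable {root : B} {f : ℕ → B}

theorem anc_of_lt (hf : InfBranch parent root f) {m n : ℕ} (hmn : m < n) :
    Anc parent (f m) (f n) := by
  induction n, hmn using Nat.le_induction with
  | base => exact .single (hf.2 m)
  | succ n _ ih => exact .head (hf.2 n) ih

theorem injective (hacyc : ∀ b, ¬ Anc parent b b) (hf : InfBranch parent root f) :
    Function.Injective f := by
  intro m n hmn
  by_contra hne
  rcases Nat.lt_or_gt_of_ne hne with h | h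
  · exact hacyc (f n) (by simpa [hmn] using hf.anc_of_lt h)
  · exact hacyc (f n) (by simpa [hmn] using hf.anc_of_lt h)

theorem not_rejected (hacyc : ∀ b, ¬ Anc parent b b) (hf : InfBranch parent root f) (n : ℕ) :
    ¬ Rejected parent (f n) :=
  Set.infinite_of_injective_forall_mem (f := fun k => f (n + k + 1))
    (fun _ _ h => by simpa using hf.injective hacyc h) (fun _ => hf.anc_of_lt (by omega))

theorem eq (hacyc : ∀ b, ¬ Anc parent b b) (hdec : GloballyDecisive parent) {g : ℕ → B}
    (hf : InfBranch parent root f) (hg : InfBranch parent root g) : f = g := by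
  funext n
  induction n with
  | zero => rw [hf.1, hg.1]
  | succ n ih =>
    have hgn : ChildOf parent (g (n + 1)) (f n) := ih ▸ hg.2 n
    exact (childOf_eq_of_accepted_of_not_rejected (hacyc (f n)) (hf.2 n) hgn
      (hdec.accepted (hf.not_rejected hacyc (n + 1))) (hg.not_rejected hacyc (n + 1))).symm

end InfBranch

end Blockchain

/-- A globally decisive blockchain tree has exactly one infinite branch. -/
theorem stmt_1 {B : Type} (root : B) (parent : B → Option B) (N : ℕ)
    (hroot : parent root = none)
    (hreach : ∀ b, AncOrEq parent root b)
    (harity : ∀ b : B, {c | parent c = some b}.Finite ∧ {c | parent c = some b}.ncard ≤ N)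
    (hdec : GloballyDecisive parent) :
    ∃! f : ℕ → B, InfBranch parent root f := by
  have hacyc := not_anc_self_of_root hroot hreach
  obtain ⟨f, hf⟩ := exists_infBranch_of_forall_exists_childOf (Accepted parent)
    (accepted_of_forall_ancOrEq hreach) fun b => hdec.exists_accepted_childOf (harity b).1
  exact ⟨f, hf, fun g hg => hg.eq hacyc hdec hf⟩
end

section
/- The pool graph of any computation is a directed acyclic graph: if the relation 'pool P1 has infinitely many links to pool P2' had a directed cycle, the pools on the cycle would merge into one pool, contradicting maximality. -/
/-- A journey from `m` to `m'` starting after round `r`: a nonempty temporal path of links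
occurring in strictly increasing rounds, all after `r`. -/
def Journey {M : Type} (link : ℕ → M → M → Prop) (r : ℕ) (m m' : M) : Prop :=
  ∃ (k : ℕ) (f : ℕ → M) (t : ℕ → ℕ),
    0 < k ∧ f 0 = m ∧ f k = m' ∧
    (∀ i, i < k → link (t i) (f i) (f (i + 1))) ∧
    (∀ i, i < k → r < t i) ∧
    (∀ i j, i < j → j < k → t i < t j)

/-- `m` has infinitely many journeys to `m'`: journeys starting arbitrarily late. -/
def InfJ {M : Type} (link : ℕ → M → M → Prop) (m m' : M) : Prop :=
  ∀ r : ℕ, Journey link r m m'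

/-- The pool relation: equal, or infinitely many journeys in both directions. -/
def PoolRel {M : Type} (link : ℕ → M → M → Prop) (m m' : M) : Prop :=
  m = m' ∨ (InfJ link m m' ∧ InfJ link m' m)

/-- A mining pool: an equivalence class of the pool relation. -/
def IsPool {M : Type} (link : ℕ → M → M → Prop) (P : Set M) : Prop :=
  ∃ m : M, P = {m' | PoolRel link m m'}

/-- Pool-graph edge: infinitely many rounds contain a link from `P1` to `P2`. -/
def PoolEdge {M : Type} (link : ℕ → M → M → Prop) (P1 P2 : Set M) : Prop :=
  ∀ r : ℕ, ∃ ρ, r < ρ ∧ ∃ m1 ∈ P1, ∃ m2 ∈ P2, link ρ m1 m2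

/-- Edge of the pool graph (between pools). -/
def PGEdge {M : Type} (link : ℕ → M → M → Prop) (P1 P2 : Set M) : Prop :=
  IsPool link P1 ∧ IsPool link P2 ∧ PoolEdge link P1 P2

/-- A source pool: a pool with only finitely many journeys from outside miners into it,
i.e. no outside miner has infinitely many journeys to a pool member. -/
def SourcePool {M : Type} (link : ℕ → M → M → Prop) (P : Set M) : Prop :=
  IsPool link P ∧ ∀ m, m ∉ P → ∀ m' ∈ P, ¬ InfJ link m m'

/-! Infinitely many journeys compose: a journey can be continued by any journey that starts after
its last link. By pigeonhole over the finitely many pairs of miners, a pool-graph edge `P → Q`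
yields one fixed pair with infinitely many links, hence infinitely many journeys from every miner
of `P` to every miner of `Q`. Around a cycle of pools this gives infinitely many journeys in both
directions between members of `P1` and `P2`, which therefore lie in one pool. -/

open Filter

section

variable {M : Type} {link : ℕ → M → M → Prop}

lemma Journey.exists_extend {r : ℕ} {a b : M} (h : Journey link r a b) :
    ∃ s, ∀ {c}, Journey link s b c → Journey link r a c := by
  obtain ⟨k, f, t, hk, hf0, hfk, hlink, hr, hmono⟩ := h
  refine ⟨t (k - 1), fun {c} h' => ?_⟩
  obtain ⟨k', g, t', hk', hg0, hgk, hlink', hr', hmono'⟩ := h'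
  have hlast : ∀ i < k, t i ≤ t (k - 1) := fun i hi => by
    rcases (show i < k - 1 ∨ i = k - 1 by omega) with h | rfl
    exacts [(hmono i _ h (by omega)).le, le_rfl]
  refine ⟨k + k', fun i => if i < k then f i else g (i - k),
    fun i => if i < k then t i else t' (i - k), by omega, by simp [hk, hf0], by simp [hgk],
    ?_, ?_, ?_⟩
  · intro i hi
    by_cases hik : i + 1 < k
    · simpa [hik, show i < k by omega] using hlink i (by omega)
    by_cases hi' : i < k
    · simp only [hi', hik, if_true, if_false]
      rw [show i + 1 - k = 0 by omega, hg0, ← hfk, show k = i + 1 by omega]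
      exact hlink i hi'
    · simp only [hi', hik, if_false]
      rw [show i + 1 - k = i - k + 1 by omega]
      exact hlink' (i - k) (by omega)
  · intro i hi
    beta_reduce
    split_ifs with hi'
    · exact hr i hi'
    · exact (hr (k - 1) (by omega)).trans (hr' (i - k) (by omega))
  · intro i j hij hj
    beta_reduce
    split_ifs with hi' hj' hj'
    · exact hmono i j hij hj'
    · exact (hlast i hi').trans_lt (hr' (j - k) (by omega))
    · omega
    · exact hmono' (i - k) (j - k) (by omega) (by omega)

lemma InfJ.trans {a b c : M} (hab : InfJ link a b) (hbc : InfJ link b c) : InfJ link a c :=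
  fun r => by
    obtain ⟨s, hs⟩ := (hab r).exists_extend
    exact hs (hbc s)

lemma InfJ.of_frequently_link {a b : M} (h : ∃ᶠ ρ in atTop, link ρ a b) : InfJ link a b := by
  intro r
  obtain ⟨ρ, hρ, hlink⟩ := frequently_atTop'.1 h r
  exact ⟨1, fun i => if i = 0 then a else b, fun _ => ρ, one_pos, rfl, rfl,
    fun i hi => by simpa [show i = 0 by omega] using hlink, fun _ _ => hρ,
    fun _ _ _ _ => by omega⟩

lemma poolRel_equivalence : Equivalence (PoolRel link) where
  refl _ := Or.inl rfl
  symm := by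
    rintro _ _ (rfl | ⟨hab, hba⟩)
    exacts [Or.inl rfl, Or.inr ⟨hba, hab⟩]
  trans := by
    rintro _ _ _ (rfl | ⟨hab, hba⟩) (rfl | ⟨hbc, hcb⟩)
    exacts [Or.inl rfl, Or.inr ⟨hbc, hcb⟩, Or.inr ⟨hab, hba⟩,
      Or.inr ⟨hab.trans hbc, hcb.trans hba⟩]

lemma PoolRel.trans_infJ {a b c : M} (hab : PoolRel link a b) (hbc : InfJ link b c) :
    InfJ link a c := by
  rcases hab with rfl | ⟨hab, -⟩
  exacts [hbc, hab.trans hbc]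

lemma InfJ.trans_poolRel {a b c : M} (hab : InfJ link a b) (hbc : PoolRel link b c) :
    InfJ link a c := by
  rcases hbc with rfl | ⟨hbc, -⟩
  exacts [hab, hab.trans hbc]

lemma IsPool.poolRel {P : Set M} (hP : IsPool link P) {a b : M} (ha : a ∈ P) (hb : b ∈ P) :
    PoolRel link a b := by
  obtain ⟨m, rfl⟩ := hP
  exact poolRel_equivalence.trans (poolRel_equivalence.symm ha) hb

lemma IsPool.nonempty {P : Set M} (hP : IsPool link P) : P.Nonempty := by
  obtain ⟨m, rfl⟩ := hP
  exact ⟨m, Or.inl rfl⟩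

lemma IsPool.eq_of_poolRel {P Q : Set M} (hP : IsPool link P) (hQ : IsPool link Q) {a b : M}
    (ha : a ∈ P) (hb : b ∈ Q) (hab : PoolRel link a b) : P = Q := by
  obtain ⟨p, rfl⟩ := hP
  obtain ⟨q, rfl⟩ := hQ
  have hpq : PoolRel link p q :=
    poolRel_equivalence.trans ha (poolRel_equivalence.trans hab (poolRel_equivalence.symm hb))
  ext x
  exact ⟨poolRel_equivalence.trans (poolRel_equivalence.symm hpq),
    poolRel_equivalence.trans hpq⟩

lemma PoolEdge.exists_frequently_link [Finite M] {P Q : Set M} (h : PoolEdge link P Q) :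
    ∃ a ∈ P, ∃ b ∈ Q, ∃ᶠ ρ in atTop, link ρ a b := by
  have h : ∃ᶠ ρ in atTop, ∃ a, a ∈ P ∧ ∃ b, b ∈ Q ∧ link ρ a b :=
    frequently_atTop'.2 h
  simpa only [frequently_exists, frequently_and_distrib_left] using h

lemma PGEdge.infJ [Finite M] {P Q : Set M} (h : PGEdge link P Q) {x y : M} (hx : x ∈ P)
    (hy : y ∈ Q) : InfJ link x y := by
  obtain ⟨hP, hQ, hPQ⟩ := h
  obtain ⟨a, ha, b, hb, hab⟩ := hPQ.exists_frequently_link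
  exact (hP.poolRel hx ha).trans_infJ
    ((InfJ.of_frequently_link hab).trans_poolRel (hQ.poolRel hb hy))

lemma infJ_of_transGen_pgEdge [Finite M] {P Q : Set M}
    (h : Relation.TransGen (PGEdge link) P Q) {x y : M} (hx : x ∈ P) (hy : y ∈ Q) :
    InfJ link x y := by
  induction h generalizing y with
  | single hPQ => exact hPQ.infJ hx hy
  | tail _ hQR ih =>
    obtain ⟨q, hq⟩ := hQR.1.nonempty
    exact (ih hq).trans (hQR.infJ hq hy)

end

/-- The pool graph of any computation is a DAG: no directed cycle of length
≥ 2, i.e. two pools that are mutually reachable by pool-graph edges coincide. -/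
theorem stmt_7 {M : Type} [Fintype M] (link : ℕ → M → M → Prop)
    (P1 P2 : Set M) (h1 : IsPool link P1) (h2 : IsPool link P2)
    (h12 : Relation.TransGen (PGEdge link) P1 P2)
    (h21 : Relation.TransGen (PGEdge link) P2 P1) :
    P1 = P2 := by
  obtain ⟨a, ha⟩ := h1.nonempty
  obtain ⟨b, hb⟩ := h2.nonempty
  exact IsPool.eq_of_poolRel h1 h2 ha hb
    (Or.inr ⟨infJ_of_transGen_pgEdge h12 ha hb, infJ_of_transGen_pgEdge h21 hb ha⟩)
end

section
/- If the blockchain of a computation contains an infinite branch, then this branch belongs to a single pool: there is a pool P and a suffix of the branch such that every block in the suffix is mined by a member of P. -/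
/-- A journey from `m` to `m'` whose links all occur in rounds in `[lo, hi)`. -/
def JourneyIn {M : Type} (link : ℕ → M → M → Prop) (lo hi : ℕ) (m m' : M) : Prop :=
  ∃ (k : ℕ) (f : ℕ → M) (t : ℕ → ℕ),
    0 < k ∧ f 0 = m ∧ f k = m' ∧
    (∀ i, i < k → link (t i) (f i) (f (i + 1))) ∧
    (∀ i, i < k → lo ≤ t i ∧ t i < hi) ∧
    (∀ i j, i < j → j < k → t i < t j)

theorem JourneyIn.journey {M : Type} {link : ℕ → M → M → Prop} {lo hi r : ℕ} {m m' : M}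
    (h : JourneyIn link lo hi m m') (hr : r < lo) : Journey link r m m' := by
  obtain ⟨k, F, t, hk, h0, hk', hlink, hrange, hinc⟩ := h
  exact ⟨k, F, t, hk, h0, hk', hlink, fun i hi => hr.trans_le (hrange i hi).1, hinc⟩

theorem Finite.eventually_infinite_fiber {α β : Type*} [Finite β] (g : α → β) :
    ∀ᶠ x in Filter.cofinite, (g ⁻¹' {g x}).Infinite := by
  refine Filter.eventually_cofinite.mpr ?_
  have hcover : {x | ¬ (g ⁻¹' {g x}).Infinite} ⊆ ⋃ b ∈ {b | (g ⁻¹' {b}).Finite}, g ⁻¹' {b} :=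
    fun x hx => Set.mem_biUnion (Set.not_infinite.mp hx) rfl
  exact ((Set.toFinite _).biUnion fun _ hb => hb).subset hcover

section Branch

variable {M : Type} {link : ℕ → M → M → Prop} {g : ℕ → M} {τ : ℕ → ℕ}

theorem infJ_of_infinite_fiber (hτ : StrictMono τ)
    (hj : ∀ i j, i < j → JourneyIn link (τ i) (τ j) (g i) (g j)) {a b : M}
    (ha : (g ⁻¹' {a}).Infinite) (hb : (g ⁻¹' {b}).Infinite) : InfJ link a b := by
  intro r
  obtain ⟨i, rfl, hri⟩ := ha.exists_gt r
  obtain ⟨j, rfl, hij⟩ := hb.exists_gt i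
  exact (hj i j hij).journey (hri.trans_le hτ.le_apply)

theorem poolRel_of_infinite_fiber (hτ : StrictMono τ)
    (hj : ∀ i j, i < j → JourneyIn link (τ i) (τ j) (g i) (g j)) {a b : M}
    (ha : (g ⁻¹' {a}).Infinite) (hb : (g ⁻¹' {b}).Infinite) : PoolRel link a b :=
  Or.inr ⟨infJ_of_infinite_fiber hτ hj ha hb, infJ_of_infinite_fiber hτ hj hb ha⟩

end Branch

/-- If the blockchain of a computation contains an infinite branch, then
this branch belongs to a single pool: there is a pool `P` and a suffix of the branch all
of whose blocks are mined by members of `P`. Here `f` enumerates the blocks of the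
infinite branch, `mnr b` is the miner of block `b`, `mt b` its mining round; ancestry
along the branch induces journeys between the corresponding miners. -/
theorem stmt_11 {M B : Type} [Fintype M] (link : ℕ → M → M → Prop)
    (f : ℕ → B) (mnr : B → M) (mt : B → ℕ)
    (hmono : StrictMono (fun n => mt (f n)))
    (hj : ∀ i j, i < j → JourneyIn link (mt (f i)) (mt (f j)) (mnr (f i)) (mnr (f j))) :
    ∃ P : Set M, IsPool link P ∧ ∃ n0 : ℕ, ∀ n, n0 ≤ n → mnr (f n) ∈ P := by
  set g : ℕ → M := fun n => mnr (f n)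
  obtain ⟨a, ha⟩ := Finite.exists_infinite_fiber g
  have hsuffix := Finite.eventually_infinite_fiber g
  rw [Nat.cofinite_eq_atTop, Filter.eventually_atTop] at hsuffix
  obtain ⟨n0, hn0⟩ := hsuffix
  exact ⟨{m | PoolRel link a m}, ⟨a, rfl⟩, n0, fun n hn =>
    poolRel_of_infinite_fiber hmono hj (Set.infinite_coe_iff.mp ha) (hn0 n hn)⟩
end

section
/- Once a branch of the blockchain is dead (all miners are mining on cousin branches longer than it), it remains dead in all subsequent rounds. -/
open Relation

section BlockTree

variable {B : Type*} (parent : B → Option B) (depth : B → ℕ)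

lemma rightUnique_parent : Relator.RightUnique (fun c b => parent c = some b) :=
  fun _ _ _ hb hc => Option.some_injective _ (hb.symm.trans hc)

lemma depth_le_of_reflTransGen_parent
    (hdepth : ∀ c p : B, parent c = some p → depth c = depth p + 1)
    {a b : B} (h : ReflTransGen (fun c b => parent c = some b) a b) :
    depth b ≤ depth a := by
  induction h with
  | refl => exact le_rfl
  | tail _ hstep ih => have := hdepth _ _ hstep; omega

def IsLongerCousin (lf a : B) : Prop :=
  depth lf < depth a ∧ ¬ ReflTransGen (fun c b => parent c = some b) a lf

variable {parent depth}

/-- The ancestors of `b` form a chain, so `a` and `lf` would be comparable if both were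
ancestors of `b`; `a` below `lf` is excluded by hypothesis and `lf` below `a` by depth. -/
lemma IsLongerCousin.of_reflTransGen
    (hdepth : ∀ c p : B, parent c = some p → depth c = depth p + 1)
    {lf a b : B} (ha : IsLongerCousin parent depth lf a)
    (hba : ReflTransGen (fun c b => parent c = some b) b a) :
    IsLongerCousin parent depth lf b := by
  obtain ⟨hlt, hnot⟩ := ha
  refine ⟨hlt.trans_le (depth_le_of_reflTransGen_parent parent depth hdepth hba), fun hb => ?_⟩
  rcases hba.total_of_right_unique (rightUnique_parent parent) hb with hal | hlfa
  · exact hnot hal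
  · exact (depth_le_of_reflTransGen_parent parent depth hdepth hlfa).not_gt hlt

end BlockTree

/-- Once a branch of the blockchain is dead (all miners are mining on
cousin branches longer than it), it remains dead in all subsequent rounds. The branch is
represented by its leaf `lf` of depth `len`; `pos r m` is the block miner `m` mines on
at round `r`. A miner's position at round `r+1` is a descendant (or equal) of some
miner's position at round `r` (it extends its own branch or adopts another miner's
branch); children are one level deeper than their parents. Dead at round `r` means every
position is strictly deeper than `len` and not a descendant of `lf`, i.e. lies on a
longer cousin branch. -/
theorem stmt_15 {B M : Type} (parent : B → Option B) (depth : B → ℕ)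
    (pos : ℕ → M → B) (lf : B) (len : ℕ) (hlen : depth lf = len)
    (hdepth : ∀ c p : B, parent c = some p → depth c = depth p + 1)
    (hswitch : ∀ (r : ℕ) (m : M), ∃ m' : M,
      Relation.ReflTransGen (fun c b => parent c = some b) (pos (r + 1) m) (pos r m'))
    (Dead : ℕ → Prop)
    (hDead : ∀ r, Dead r ↔ ∀ m : M, len < depth (pos r m) ∧
      ¬ Relation.ReflTransGen (fun c b => parent c = some b) (pos r m) lf)
    (r : ℕ) (hdead : Dead r) :
    ∀ r', r ≤ r' → Dead r' := by
  subst hlen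
  have hDead' : ∀ r, Dead r ↔ ∀ m, IsLongerCousin parent depth lf (pos r m) := hDead
  intro r' hr'
  induction r', hr' using Nat.le_induction with
  | base => exact hdead
  | succ n _ ih =>
    rw [hDead'] at ih ⊢
    intro m
    obtain ⟨m', hdesc⟩ := hswitch n m
    exact (ih m').of_reflTransGen hdepth hdesc
end

section
/- If some miner observes (via reported positions) that the depth of the current position of every source pool miner is greater than the length of branch BR, and the source pool is initially closed, then no block of the unique infinite branch is ever mined on BR, i.e., BR is dead with respect to the source pool. -/
/-- If some miner observes (via reported positions) at round `r` that the
depth of the current position of every source pool miner exceeds the length `len` of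
branch `BR`, and the source pool is initially closed — so the blocks `f n` of the unique
infinite branch are mined by source pool miners `mb n` at round `mt n` as children of
their current positions — then, positions being non-decreasing in depth, no block of the
infinite branch mined from round `r` on lies on `BR`: `BR` is dead with respect to the
source pool. -/
theorem stmt_17 {B M : Type} (depth : B → ℕ) (pos : ℕ → M → B)
    (SM : Set M) (onBR : B → Prop) (len r : ℕ)
    (f : ℕ → B) (mb : ℕ → M) (mt : ℕ → ℕ)
    (hposMono : ∀ (m : M) (ρ : ℕ), depth (pos ρ m) ≤ depth (pos (ρ + 1) m))
    (hBRlen : ∀ c : B, onBR c → depth c ≤ len)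
    (hsm : ∀ n, mb n ∈ SM)
    (hmine : ∀ n, depth (f n) = depth (pos (mt n) (mb n)) + 1)
    (hobs : ∀ m ∈ SM, len < depth (pos r m)) :
    ∀ n, r ≤ mt n → len < depth (f n) ∧ ¬ onBR (f n) := by
  intro n hn
  have hpos : len < depth (pos (mt n) (mb n)) :=
    (hobs _ (hsm n)).trans_le (monotone_nat_of_le_succ (hposMono (mb n)) hn)
  have hdeep : len < depth (f n) := hmine n ▸ Nat.lt_succ_of_lt hpos
  exact ⟨hdeep, fun hBR => (hBRlen _ hBR).not_gt hdeep⟩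
end
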